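/- Aggregate rate-limit soundness: if the rate-limit check admits an operation of amount a at time t only when the sum of amounts of all previously admitted operations within the window (t - W, t] plus a does not exceed the limit L, then for every time t, the total amount of admitted operations within any window of length W ending at t is at most L. -/

import Mathlib

/-- Sum of the amounts of admitted operations whose time lies in the window (t - W, t]. -/
noncomputable def windowedSum (S : List (ℝ × ℝ)) (t W : ℝ) : ℝ :=
  ((S.filter (fun p => decide (t - W < p.2 ∧ p.2 ≤ t))).map Prod.fst).sum

/-- The admission policy: operations (amount, time) with nonnegative amounts are
admitted sequentially at strictly increasing times, and (a, t) is admitted only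
if the windowed sum at time t plus a does not exceed the limit L. -/
inductive Admitted (W L : ℝ) : List (ℝ × ℝ) → Prop
  | nil : Admitted W L []
  | snoc (S : List (ℝ × ℝ)) (a t : ℝ) :
      Admitted W L S → 0 ≤ a → (∀ p ∈ S, p.2 < t) →
      windowedSum S t W + a ≤ L → Admitted W L (S ++ [(a, t)])

/-! Induct on the admitted sequence. Appending `(a, s)` changes only the windows `(t - W, t]`
that contain `s`. For such `t`, every earlier operation counted at `t` is also counted at `s`
(its time lies in `(t - W, s) ⊆ (s - W, s]`), so with nonnegative amounts the new window sum is
at most `windowedSum S s W + a ≤ L`, the admission check. -/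

theorem List.sum_map_filter_le_of_imp {α M : Type*} [AddCommMonoid M] [PartialOrder M]
    [IsOrderedAddMonoid M] {l : List α} {f : α → M} {p q : α → Bool}
    (hpq : ∀ x ∈ l, p x → q x) (hf : ∀ x ∈ l, 0 ≤ f x) :
    ((l.filter p).map f).sum ≤ ((l.filter q).map f).sum := by
  have hp : l.filter p = l.filter (fun x => p x && q x) :=
    List.filter_congr fun x hx => by cases h : p x <;> simp [hpq x hx, h]
  rw [hp]
  refine ((l.monotone_filter_right fun x hx => by simp_all).map f).sum_le_sum ?_
  simp only [List.mem_map, List.mem_filter]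
  rintro _ ⟨x, ⟨hx, _⟩, rfl⟩
  exact hf x hx

lemma Admitted.amount_nonneg {W L : ℝ} {S : List (ℝ × ℝ)} (hS : Admitted W L S) :
    ∀ p ∈ S, 0 ≤ p.1 := by
  induction hS with
  | nil => simp
  | snoc S a t _ ha _ _ ih =>
    simp only [List.mem_append, List.mem_singleton]
    rintro p (hp | rfl)
    exacts [ih p hp, ha]

lemma windowedSum_append_singleton (S : List (ℝ × ℝ)) (a s t W : ℝ) :
    windowedSum (S ++ [(a, s)]) t W =
      windowedSum S t W + if t - W < s ∧ s ≤ t then a else 0 := by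
  unfold windowedSum
  split_ifs with h <;> simp [List.filter_append, h]

lemma windowedSum_le_of_forall_lt {S : List (ℝ × ℝ)} (hS : ∀ p ∈ S, 0 ≤ p.1) {s t W : ℝ}
    (hlt : ∀ p ∈ S, p.2 < s) (hst : s ≤ t) :
    windowedSum S t W ≤ windowedSum S s W := by
  refine List.sum_map_filter_le_of_imp (fun p hp hpt => ?_) hS
  simp only [decide_eq_true_eq] at hpt ⊢
  exact ⟨by linarith [hpt.1], (hlt p hp).le⟩

theorem stmt_7_general (W L : ℝ) (hL : 0 ≤ L)
    (S : List (ℝ × ℝ)) (hS : Admitted W L S) :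
    ∀ t : ℝ, windowedSum S t W ≤ L := by
  induction hS with
  | nil => exact fun _ => by simpa [windowedSum] using hL
  | snoc S a s hS _ hlt hcheck ih =>
    intro t
    rw [windowedSum_append_singleton]
    split_ifs with hs
    · linarith [windowedSum_le_of_forall_lt hS.amount_nonneg hlt hs.2 (W := W)]
    · simpa using ih t

/-- Aggregate rate-limit soundness: for every time t, the total admitted amount
within any window of length W ending at t is at most L. -/
theorem stmt_7 (W L : ℝ) (hW : 0 < W) (hL : 0 ≤ L)
    (S : List (ℝ × ℝ)) (hS : Admitted W L S) :
    ∀ t : ℝ, windowedSum S t W ≤ L :=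
  stmt_7_general W L hL S hS
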